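/- arXiv:1303.5118 — 3 statements merged into one kernel-verified Lean document; each statement's English description precedes it below -/
import Mathlib

section
/- If (dω)² ≤ 1 and v·ω > 0, then v·v̇ ≤ ((1 + (v d)²)/d)·V_x·|v|·|ω| ≤ ((1 + (v d)²)/d)·V_x·|v|/d, so v² satisfies a differential inequality with right-hand side affine-quadratic in v², hence the Lipschitz bound needed for global existence. -/
/-! Put `s = √(1 + (v d)²)`. Since `s ≤ 1 + |v d|` and `v ω = |v| |ω|`,
`v (s ω - v) ≤ |v| |ω| + v² (|d ω| - 1) ≤ |v| |ω|`, and `|ω| ≤ 1 / d` because `|d ω| ≤ 1`. -/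

theorem Real.sqrt_one_add_sq_le_one_add_abs (x : ℝ) : √(1 + x ^ 2) ≤ 1 + |x| := by
  rw [Real.sqrt_le_left (by positivity)]
  nlinarith [abs_nonneg x, sq_abs x]

theorem mul_sqrt_one_add_sq_mul_sub_le {d v ω : ℝ} (hω : |d * ω| ≤ 1) (hvω : 0 ≤ v * ω) :
    v * (√(1 + (v * d) ^ 2) * ω - v) ≤ |v| * |ω| := by
  have hvω_abs : v * ω = |v| * |ω| := by rw [← abs_mul, abs_of_nonneg hvω]
  have hs := Real.sqrt_one_add_sq_le_one_add_abs (v * d)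
  calc v * (√(1 + (v * d) ^ 2) * ω - v) = √(1 + (v * d) ^ 2) * (|v| * |ω|) - v ^ 2 := by
        rw [← hvω_abs]; ring
    _ ≤ (1 + |v * d|) * (|v| * |ω|) - v ^ 2 := by gcongr
    _ = |v| * |ω| + v ^ 2 * (|d * ω| - 1) := by
        simp only [abs_mul, ← sq_abs v]; ring
    _ ≤ |v| * |ω| := by nlinarith [sq_nonneg v]

theorem abs_le_one_div_of_sq_mul_le_one {d ω : ℝ} (hd : 0 < d) (hω : (d * ω) ^ 2 ≤ 1) :
    |ω| ≤ 1 / d := by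
  rw [le_div_iff₀ hd, mul_comm, ← abs_of_pos hd, ← abs_mul]
  exact (sq_le_one_iff_abs_le_one _).1 hω

theorem vdot_bound (d Vx v ω : ℝ) (hd : 0 < d) (hVx : 0 < Vx)
    (hω : (d * ω) ^ 2 ≤ 1) (hvω : 0 < v * ω) :
    v * (((1 + (v * d) ^ 2) / d) * Vx * (Real.sqrt (1 + (v * d) ^ 2) * ω - v)) ≤
      ((1 + (v * d) ^ 2) / d) * Vx * |v| * |ω| ∧
    ((1 + (v * d) ^ 2) / d) * Vx * |v| * |ω| ≤
      ((1 + (v * d) ^ 2) / d) * Vx * |v| / d := by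
  have hC : 0 ≤ (1 + (v * d) ^ 2) / d * Vx := by positivity
  have h_vω := mul_sqrt_one_add_sq_mul_sub_le ((sq_le_one_iff_abs_le_one _).1 hω) hvω.le
  have h_ω := abs_le_one_div_of_sq_mul_le_one hd hω
  constructor
  · calc _ = (1 + (v * d) ^ 2) / d * Vx * (v * (√(1 + (v * d) ^ 2) * ω - v)) := by ring
      _ ≤ _ := by rw [mul_assoc _ |v|]; gcongr
  · calc _ ≤ (1 + (v * d) ^ 2) / d * Vx * |v| * (1 / d) := by gcongr
      _ = _ := by ring
end

section
/- With ξ̇ = −β·σ((C₀/β)(ξ + ρ·σ(C₂ y₂))), β, C₀, ρ, C₂ > 0: whenever |ξ| > (3/2)ρ, one has ξ·ξ̇ < −(ρ/2)·β·σ(C₀ρ/(2β)) < 0. -/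
/-! Since `sat` is the clamp of its argument to `[-1, 1]`, it is monotone and odd. For `ξ > 3ρ/2`
the term `ρ * sat (C₂ * y₂)` cannot push `ξ + ρ * sat (C₂ * y₂)` below `ρ / 2`, so by monotonicity
the saturated feedback is at least `sat (C₀ρ / (2β)) > 0`; oddness reduces `ξ < -3ρ/2` to this case. -/

noncomputable def sat (x : ℝ) : ℝ := x / max 1 |x|

open Set

theorem sat_eq_max_min (x : ℝ) : sat x = max (-1) (min x 1) := by
  rcases le_or_gt |x| 1 with hx | hx
  · rw [sat, max_eq_left hx, div_one, min_eq_left (abs_le.mp hx).2, max_eq_right (abs_le.mp hx).1]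
  · rw [sat, max_eq_right hx.le]
    rcases lt_abs.mp hx with hpos | hneg
    · rw [abs_of_pos (by linarith), div_self (by linarith), min_eq_right hpos.le,
        max_eq_right (by norm_num)]
    · rw [abs_of_neg (by linarith), div_neg, div_self (by linarith), min_eq_left (by linarith),
        max_eq_left (by linarith)]

theorem sat_monotone : Monotone sat := fun x y hxy => by
  simp only [sat_eq_max_min]
  gcongr

theorem sat_mem_Icc (x : ℝ) : sat x ∈ Icc (-1) 1 := by
  rw [sat_eq_max_min]
  exact ⟨le_max_left _ _, max_le (by norm_num) (min_le_right _ _)⟩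

theorem sat_neg (x : ℝ) : sat (-x) = -sat x := by
  rw [sat, sat, abs_neg, neg_div]

theorem sat_pos {x : ℝ} (hx : 0 < x) : 0 < sat x :=
  div_pos hx (lt_max_of_lt_left one_pos)

theorem half_mul_sat_lt_mul_sat_of_lt {k ρ ξ s : ℝ} (hk : 0 < k) (hρ : 0 < ρ)
    (hs : s ∈ Icc (-1) 1) (hξ : 3 / 2 * ρ < ξ) :
    ρ / 2 * sat (k * (ρ / 2)) < ξ * sat (k * (ξ + ρ * s)) := by
  have ht : 0 < sat (k * (ρ / 2)) := sat_pos (by positivity)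
  have harg : ρ / 2 ≤ ξ + ρ * s := by nlinarith [hs.1]
  have hmono : sat (k * (ρ / 2)) ≤ sat (k * (ξ + ρ * s)) :=
    sat_monotone (mul_le_mul_of_nonneg_left harg hk.le)
  calc ρ / 2 * sat (k * (ρ / 2)) < ξ * sat (k * (ρ / 2)) := by gcongr; linarith
    _ ≤ ξ * sat (k * (ξ + ρ * s)) := by gcongr; linarith

theorem half_mul_sat_lt_mul_sat_of_lt_abs {k ρ ξ s : ℝ} (hk : 0 < k) (hρ : 0 < ρ)
    (hs : s ∈ Icc (-1) 1) (hξ : 3 / 2 * ρ < |ξ|) :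
    ρ / 2 * sat (k * (ρ / 2)) < ξ * sat (k * (ξ + ρ * s)) := by
  rcases lt_abs.mp hξ with hpos | hneg
  · exact half_mul_sat_lt_mul_sat_of_lt hk hρ hs hpos
  · have hs' : -s ∈ Icc (-1) 1 := ⟨by linarith [hs.2], by linarith [hs.1]⟩
    have h := half_mul_sat_lt_mul_sat_of_lt hk hρ hs' hneg
    rwa [show k * (-ξ + ρ * -s) = -(k * (ξ + ρ * s)) by ring, sat_neg, neg_mul_neg] at h

theorem xi_decrease_general (ξ y₂ β C₀ ρ C₂ : ℝ)
    (hβ : 0 < β) (hC₀ : 0 < C₀) (hρ : 0 < ρ)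
    (hξ : (3 / 2) * ρ < |ξ|) :
    ξ * (-β * sat ((C₀ / β) * (ξ + ρ * sat (C₂ * y₂)))) <
      -(ρ / 2) * β * sat (C₀ * ρ / (2 * β)) ∧
    -(ρ / 2) * β * sat (C₀ * ρ / (2 * β)) < 0 := by
  have hk : 0 < C₀ / β := div_pos hC₀ hβ
  rw [show C₀ * ρ / (2 * β) = C₀ / β * (ρ / 2) by field_simp]
  have hfeedback := half_mul_sat_lt_mul_sat_of_lt_abs hk hρ (sat_mem_Icc (C₂ * y₂)) hξ
  have ht : 0 < sat (C₀ / β * (ρ / 2)) := sat_pos (by positivity)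
  constructor
  · linarith [mul_lt_mul_of_pos_left hfeedback hβ]
  · linarith [mul_pos (mul_pos hρ hβ) ht]

theorem xi_decrease (ξ y₂ β C₀ ρ C₂ : ℝ)
    (hβ : 0 < β) (hC₀ : 0 < C₀) (hρ : 0 < ρ) (hC₂ : 0 < C₂)
    (hξ : (3 / 2) * ρ < |ξ|) :
    ξ * (-β * sat ((C₀ / β) * (ξ + ρ * sat (C₂ * y₂)))) <
      -(ρ / 2) * β * sat (C₀ * ρ / (2 * β)) ∧
    -(ρ / 2) * β * sat (C₀ * ρ / (2 * β)) < 0 :=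
  xi_decrease_general ξ y₂ β C₀ ρ C₂ hβ hC₀ hρ hξ
end

section
/- Define F(ξ) = ∫₀^ξ (sin s)/s ds (the sine integral). Then F is odd, and for all ξ with 0 < |ξ| ≤ 1: 1 − ξ²/18 ≤ F(ξ)/ξ ≤ 1. -/
noncomputable def F (ξ : ℝ) : ℝ :=
  ∫ s in (0:ℝ)..ξ, if s = 0 then 1 else Real.sin s / s

/-! The integrand of `F` is, by definition, `Real.sinc`, which is even and satisfies
`1 - s ^ 2 / 6 ≤ sinc s ≤ 1` (from the Taylor bound `|s - sin s| ≤ |s| ^ 3 / 6`).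
Evenness makes `F` odd, hence `F ξ / ξ` even, so it suffices to take `ξ > 0`; there integrating
the two bounds over `[0, ξ]` gives `ξ - ξ ^ 3 / 18 ≤ F ξ ≤ ξ`. -/

open Real intervalIntegral

theorem integral_zero_neg_of_even {E : Type*} [NormedAddCommGroup E] [NormedSpace ℝ E]
    {f : ℝ → E} (hf : ∀ x, f (-x) = f x) (b : ℝ) :
    ∫ x in (0:ℝ)..-b, f x = -∫ x in (0:ℝ)..b, f x := by
  simpa [hf, integral_symm (-b)] using (integral_comp_neg (a := 0) (b := b) f).symm

theorem abs_one_sub_sinc_le (x : ℝ) : |1 - sinc x| ≤ x ^ 2 / 6 := by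
  rcases eq_or_ne x 0 with rfl | hx
  · simp
  calc |1 - sinc x| = |x - sin x| / |x| := by
        rw [sinc_of_ne_zero hx, ← abs_div, sub_div, div_self hx]
    _ ≤ |x| ^ 3 / 6 / |x| := by gcongr; exact abs_sub_sin_le x
    _ = x ^ 2 / 6 := by field_simp; rw [sq_abs]

theorem F_neg (ξ : ℝ) : F (-ξ) = -F ξ :=
  integral_zero_neg_of_even sinc_neg ξ

theorem F_div_self_neg (ξ : ℝ) : F (-ξ) / -ξ = F ξ / ξ := by
  rw [F_neg, neg_div_neg_eq]

theorem F_le_self {ξ : ℝ} (hξ : 0 ≤ ξ) : F ξ ≤ ξ := by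
  calc F ξ ≤ ∫ _ in (0:ℝ)..ξ, (1 : ℝ) :=
        integral_mono_on hξ (continuous_sinc.intervalIntegrable 0 ξ) intervalIntegrable_const
          fun s _ => sinc_le_one s
    _ = ξ := by simp

theorem sub_cube_div_eighteen_le_F {ξ : ℝ} (hξ : 0 ≤ ξ) : ξ - ξ ^ 3 / 18 ≤ F ξ := by
  have h_poly : Continuous fun s : ℝ => s ^ 2 / 6 := (continuous_pow 2).div_const 6
  calc ξ - ξ ^ 3 / 18 = ∫ s in (0:ℝ)..ξ, (1 - s ^ 2 / 6) := by
        rw [integral_sub intervalIntegrable_const (h_poly.intervalIntegrable 0 ξ), integral_div,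
          integral_pow, integral_const, smul_eq_mul]
        ring
    _ ≤ F ξ :=
        integral_mono_on hξ ((continuous_const.sub h_poly).intervalIntegrable 0 ξ)
          (continuous_sinc.intervalIntegrable 0 ξ)
          fun s _ => sub_le_comm.mp (abs_le.mp (abs_one_sub_sinc_le s)).2

theorem F_div_self_bounds {ξ : ℝ} (hξ : 0 < ξ) : 1 - ξ ^ 2 / 18 ≤ F ξ / ξ ∧ F ξ / ξ ≤ 1 := by
  constructor
  · rw [le_div_iff₀ hξ]
    linarith [sub_cube_div_eighteen_le_F hξ.le]
  · rw [div_le_one hξ]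
    exact F_le_self hξ.le

theorem F_odd_and_bounds :
    (∀ ξ : ℝ, F (-ξ) = -F ξ) ∧
    (∀ ξ : ℝ, ξ ≠ 0 → |ξ| ≤ 1 →
      1 - ξ ^ 2 / 18 ≤ F ξ / ξ ∧ F ξ / ξ ≤ 1) := by
  refine ⟨F_neg, fun ξ hξ _ => ?_⟩
  have h_abs : F ξ / ξ = F |ξ| / |ξ| := by
    rcases abs_choice ξ with h | h <;> rw [h]
    exact (F_div_self_neg ξ).symm
  rw [h_abs, ← sq_abs ξ]
  exact F_div_self_bounds (abs_pos.mpr hξ)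
end
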